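/- arXiv:2207.05802 — 2 statements merged into one kernel-verified Lean document; each statement's English description precedes it below -/
import Mathlib

section
/- Let n, r be positive integers, λ > 0, Ω ⊆ {1,…,n}×{1,…,n}, M ∈ ℝ^{n×n}, and σ_max > 0. Let X, Y ∈ ℝ^{n×r} satisfy θ := ‖P_Ω(XYᵀ − M)‖_F > 0, ‖X‖ ≤ √(2σ_max) and ‖Y‖ ≤ √(2σ_max). Then ‖XᵀX − YᵀY‖_F ≤ (2√(2σ_max)/λ)·‖∇g(X,Y)‖_F. -/
open MeasureTheory ProbabilityTheory Matrix
open scoped ENNReal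

noncomputable section

/-- Frobenius norm of a real matrix. -/
def frobNorm {n m : ℕ} (A : Matrix (Fin n) (Fin m) ℝ) : ℝ :=
  Real.sqrt (∑ i, ∑ j, (A i j) ^ 2)

/-- Entrywise sup norm (largest absolute value of an entry). -/
def infNorm {n m : ℕ} (A : Matrix (Fin n) (Fin m) ℝ) : ℝ :=
  ⨆ i, ⨆ j, |A i j|

/-- Largest Euclidean norm of a row. -/
def row2InfNorm {n m : ℕ} (A : Matrix (Fin n) (Fin m) ℝ) : ℝ :=
  ⨆ i, Real.sqrt (∑ j, (A i j) ^ 2)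

/-- The (unsorted) singular values of a real matrix: square roots of the
eigenvalues of `Aᵀ * A`. -/
def singVal {n m : ℕ} (A : Matrix (Fin n) (Fin m) ℝ) : Fin m → ℝ :=
  fun j => Real.sqrt ((Matrix.isHermitian_conjTranspose_mul_self A).eigenvalues j)

/-- Spectral norm: the largest singular value. -/
def specNorm {n m : ℕ} (A : Matrix (Fin n) (Fin m) ℝ) : ℝ :=
  ⨆ j, singVal A j

/-- Nuclear norm: the sum of the singular values. -/
def nucNorm {n m : ℕ} (A : Matrix (Fin n) (Fin m) ℝ) : ℝ :=
  ∑ j, singVal A j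

open Classical in
/-- Projection onto the observed entries. -/
def POmega {n : ℕ} (S : Set (Fin n × Fin n)) (A : Matrix (Fin n) (Fin n) ℝ) :
    Matrix (Fin n) (Fin n) ℝ :=
  fun i j => if (i, j) ∈ S then A i j else 0

/-- Trace inner product of two real matrices. -/
def minner {n m : ℕ} (A B : Matrix (Fin n) (Fin m) ℝ) : ℝ :=
  ∑ i, ∑ j, A i j * B i j

/-- The square-root matrix completion objective. -/
def sqF {n : ℕ} (S : Set (Fin n × Fin n)) (M : Matrix (Fin n) (Fin n) ℝ) (lam : ℝ)
    (L : Matrix (Fin n) (Fin n) ℝ) : ℝ :=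
  frobNorm (POmega S (L - M)) + lam * nucNorm L

/-- `X`-gradient of the nonconvex objective `g`. -/
def gradX {n r : ℕ} (S : Set (Fin n × Fin n)) (M : Matrix (Fin n) (Fin n) ℝ) (lam : ℝ)
    (X Y : Matrix (Fin n) (Fin r) ℝ) : Matrix (Fin n) (Fin r) ℝ :=
  (frobNorm (POmega S (X * Yᵀ - M)))⁻¹ • (POmega S (X * Yᵀ - M) * Y) + lam • X

/-- `Y`-gradient of the nonconvex objective `g`. -/
def gradY {n r : ℕ} (S : Set (Fin n × Fin n)) (M : Matrix (Fin n) (Fin n) ℝ) (lam : ℝ)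
    (X Y : Matrix (Fin n) (Fin r) ℝ) : Matrix (Fin n) (Fin r) ℝ :=
  (frobNorm (POmega S (X * Yᵀ - M)))⁻¹ • ((POmega S (X * Yᵀ - M))ᵀ * X) + lam • Y

/-- Frobenius norm of the full gradient of `g`. -/
def gradNorm {n r : ℕ} (S : Set (Fin n × Fin n)) (M : Matrix (Fin n) (Fin n) ℝ) (lam : ℝ)
    (X Y : Matrix (Fin n) (Fin r) ℝ) : ℝ :=
  Real.sqrt ((frobNorm (gradX S M lam X Y)) ^ 2 + (frobNorm (gradY S M lam X Y)) ^ 2)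

/-- Orthogonal projection onto the tangent space `T = {U Aᵀ + B Vᵀ}` (for `U, V` with
orthonormal columns), with respect to the trace inner product. -/
def projT {n r : ℕ} (U V : Matrix (Fin n) (Fin r) ℝ) (A : Matrix (Fin n) (Fin n) ℝ) :
    Matrix (Fin n) (Fin n) ℝ :=
  U * Uᵀ * A + A * (V * Vᵀ) - U * Uᵀ * A * (V * Vᵀ)

/-- Orthogonal projection onto the orthogonal complement of the tangent space. -/
def projTperp {n r : ℕ} (U V : Matrix (Fin n) (Fin r) ℝ) (A : Matrix (Fin n) (Fin n) ℝ) :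
    Matrix (Fin n) (Fin n) ℝ :=
  A - projT U V A

open Classical in
/-- Indicator (as a real random variable) that an entry is observed. -/
def obsInd {n : ℕ} {Ω₀ : Type} (Obs : Ω₀ → Set (Fin n × Fin n)) (k : Fin n × Fin n)
    (ω : Ω₀) : ℝ :=
  if k ∈ Obs ω then 1 else 0

end

/-!
The data-fit parts of `Xᵀ ∇_X g` and `(∇_Y g)ᵀ Y` are both `θ⁻¹ Xᵀ P_Ω(XYᵀ - M) Y`, so they cancel
and `Xᵀ ∇_X g - (∇_Y g)ᵀ Y = λ (XᵀX - YᵀY)`. The bound then follows from the triangle inequality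
and `‖Xᵀ A‖_F ≤ ‖X‖ ‖A‖_F`, proved column by column from the Rayleigh-quotient bound
`vᵀ (XᵀX) v ≤ ‖X‖² ‖v‖²` given by the spectral theorem.
-/

open scoped RealInnerProductSpace

theorem Matrix.IsHermitian.dotProduct_mulVec_le {ι : Type*} [Fintype ι] [DecidableEq ι]
    {A : Matrix ι ι ℝ} (hA : A.IsHermitian) {c : ℝ} (hc : ∀ j, hA.eigenvalues j ≤ c)
    (v : ι → ℝ) : v ⬝ᵥ (A *ᵥ v) ≤ c * (v ⬝ᵥ v) := by
  set b := hA.eigenvectorBasis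
  set w : EuclideanSpace ℝ ι := WithLp.toLp 2 v
  have hcoord : ∀ j, v ⬝ᵥ b j = ⟪b j, w⟫ := fun j => by
    simp [w, EuclideanSpace.inner_eq_star_dotProduct]
  have hv : v = ∑ j, ⟪b j, w⟫ • ⇑(b j) := by
    simpa [w] using congrArg WithLp.ofLp (b.sum_repr' w).symm
  have hAv : A *ᵥ v = ∑ j, (hA.eigenvalues j * ⟪b j, w⟫) • ⇑(b j) := by
    conv_lhs => rw [hv]
    simp only [mulVec_sum, mulVec_smul, b, mulVec_eigenvectorBasis, smul_smul, mul_comm]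
  have hquad : v ⬝ᵥ (A *ᵥ v) = ∑ j, hA.eigenvalues j * ⟪b j, w⟫ ^ 2 := by
    simp only [hAv, dotProduct_sum, dotProduct_smul, hcoord, smul_eq_mul, mul_assoc, sq]
  have hnorm : v ⬝ᵥ v = ∑ j, ⟪b j, w⟫ ^ 2 := by
    rw [b.sum_sq_inner_right, ← real_inner_self_eq_norm_sq, EuclideanSpace.inner_toLp_toLp]
    simp
  rw [hquad, hnorm, Finset.mul_sum]
  exact Finset.sum_le_sum fun j _ => mul_le_mul_of_nonneg_right (hc j) (sq_nonneg _)

section SpectralNorm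

variable {n m : ℕ}

theorem singVal_le_specNorm (A : Matrix (Fin n) (Fin m) ℝ) (j : Fin m) :
    singVal A j ≤ specNorm A :=
  le_ciSup (Set.finite_range _).bddAbove j

theorem specNorm_nonneg (A : Matrix (Fin n) (Fin m) ℝ) : 0 ≤ specNorm A :=
  Real.iSup_nonneg fun _ => Real.sqrt_nonneg _

theorem eigenvalues_conjTranspose_mul_self_le_specNorm_sq (A : Matrix (Fin n) (Fin m) ℝ)
    (j : Fin m) : (isHermitian_conjTranspose_mul_self A).eigenvalues j ≤ specNorm A ^ 2 :=
  calc _ = singVal A j ^ 2 :=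
        (Real.sq_sqrt (eigenvalues_conjTranspose_mul_self_nonneg A j)).symm
    _ ≤ specNorm A ^ 2 := pow_le_pow_left₀ (Real.sqrt_nonneg _) (singVal_le_specNorm A j) 2

theorem mulVec_dotProduct_self_le (A : Matrix (Fin n) (Fin m) ℝ) (v : Fin m → ℝ) :
    (A *ᵥ v) ⬝ᵥ (A *ᵥ v) ≤ specNorm A ^ 2 * (v ⬝ᵥ v) := by
  have hquad : (A *ᵥ v) ⬝ᵥ (A *ᵥ v) = v ⬝ᵥ ((Aᴴ * A) *ᵥ v) := by
    rw [conjTranspose_eq_transpose_of_trivial, ← mulVec_mulVec, dotProduct_mulVec,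
      ← mulVec_transpose, dotProduct_comm]
  rw [hquad]
  exact (isHermitian_conjTranspose_mul_self A).dotProduct_mulVec_le
    (eigenvalues_conjTranspose_mul_self_le_specNorm_sq A) v

/-- `‖Aᵀ w‖² = ⟨w, A Aᵀ w⟩ ≤ ‖w‖ ‖A Aᵀ w‖ ≤ ‖w‖ ‖A‖ ‖Aᵀ w‖`, by Cauchy–Schwarz. -/
theorem transpose_mulVec_dotProduct_self_le (A : Matrix (Fin n) (Fin m) ℝ) (w : Fin n → ℝ) :
    (Aᵀ *ᵥ w) ⬝ᵥ (Aᵀ *ᵥ w) ≤ specNorm A ^ 2 * (w ⬝ᵥ w) := by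
  set u := Aᵀ *ᵥ w
  have hu : u ⬝ᵥ u = w ⬝ᵥ (A *ᵥ u) := by
    rw [dotProduct_mulVec w A u, ← mulVec_transpose A w]
  have hcs : (w ⬝ᵥ (A *ᵥ u)) ^ 2 ≤ (w ⬝ᵥ w) * ((A *ᵥ u) ⬝ᵥ (A *ᵥ u)) := by
    simpa only [dotProduct, sq] using Finset.sum_mul_sq_le_sq_mul_sq Finset.univ w (A *ᵥ u)
  have hww : 0 ≤ w ⬝ᵥ w := dotProduct_self_star_nonneg w
  have huu : 0 ≤ u ⬝ᵥ u := dotProduct_self_star_nonneg u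
  have hsq : (u ⬝ᵥ u) ^ 2 ≤ (specNorm A ^ 2 * (w ⬝ᵥ w)) * (u ⬝ᵥ u) := by
    rw [← hu] at hcs
    nlinarith [mulVec_dotProduct_self_le A u]
  rcases huu.eq_or_lt with hzero | hpos
  · rw [← hzero]; positivity
  · nlinarith

end SpectralNorm

section Frobenius

attribute [local instance] Matrix.frobeniusNormedAddCommGroup Matrix.frobeniusNormedSpace

variable {n m : ℕ}

theorem frobNorm_nonneg (A : Matrix (Fin n) (Fin m) ℝ) : 0 ≤ frobNorm A :=
  Real.sqrt_nonneg _

theorem frobNorm_eq_norm (A : Matrix (Fin n) (Fin m) ℝ) : frobNorm A = ‖A‖ := by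
  simp [frobNorm, frobenius_norm_def, Real.sqrt_eq_rpow]

theorem frobNorm_sub_le (A B : Matrix (Fin n) (Fin m) ℝ) :
    frobNorm (A - B) ≤ frobNorm A + frobNorm B := by
  simpa only [frobNorm_eq_norm] using norm_sub_le A B

theorem frobNorm_smul (c : ℝ) (A : Matrix (Fin n) (Fin m) ℝ) :
    frobNorm (c • A) = |c| * frobNorm A := by
  simp only [frobNorm_eq_norm, norm_smul, Real.norm_eq_abs]

theorem frobNorm_transpose (A : Matrix (Fin n) (Fin m) ℝ) : frobNorm Aᵀ = frobNorm A := by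
  simp only [frobNorm_eq_norm, frobenius_norm_transpose]

theorem frobNorm_sq_eq_sum_col (A : Matrix (Fin n) (Fin m) ℝ) :
    frobNorm A ^ 2 = ∑ j, Aᵀ j ⬝ᵥ Aᵀ j := by
  rw [frobNorm, Real.sq_sqrt (by positivity), Finset.sum_comm]
  simp [dotProduct, sq]

theorem frobNorm_transpose_mul_le {r : ℕ} (X : Matrix (Fin n) (Fin r) ℝ)
    (A : Matrix (Fin n) (Fin m) ℝ) : frobNorm (Xᵀ * A) ≤ specNorm X * frobNorm A := by
  have hcol : ∀ j, (Xᵀ * A)ᵀ j = Xᵀ *ᵥ Aᵀ j := fun j => by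
    ext i; simp [mul_apply, mulVec, dotProduct]
  have hsq : frobNorm (Xᵀ * A) ^ 2 ≤ (specNorm X * frobNorm A) ^ 2 := by
    rw [mul_pow, frobNorm_sq_eq_sum_col, frobNorm_sq_eq_sum_col, Finset.mul_sum]
    exact Finset.sum_le_sum fun j _ => hcol j ▸ transpose_mulVec_dotProduct_self_le X (Aᵀ j)
  exact (pow_le_pow_iff_left₀ (frobNorm_nonneg _)
    (mul_nonneg (specNorm_nonneg X) (frobNorm_nonneg A)) two_ne_zero).mp hsq

end Frobenius

section Gradient

variable {n r : ℕ} (S : Set (Fin n × Fin n)) (M : Matrix (Fin n) (Fin n) ℝ) (lam : ℝ)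
  (X Y : Matrix (Fin n) (Fin r) ℝ)

theorem frobNorm_gradX_le_gradNorm : frobNorm (gradX S M lam X Y) ≤ gradNorm S M lam X Y :=
  Real.le_sqrt_of_sq_le (le_add_of_nonneg_right (sq_nonneg _))

theorem frobNorm_gradY_le_gradNorm : frobNorm (gradY S M lam X Y) ≤ gradNorm S M lam X Y :=
  Real.le_sqrt_of_sq_le (le_add_of_nonneg_left (sq_nonneg _))

theorem transpose_mul_gradX_sub_transpose_gradY_mul :
    Xᵀ * gradX S M lam X Y - (gradY S M lam X Y)ᵀ * Y = lam • (Xᵀ * X - Yᵀ * Y) := by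
  simp only [gradX, gradY, transpose_add, transpose_smul, transpose_mul, transpose_transpose,
    Matrix.mul_add, Matrix.add_mul, Matrix.mul_smul, Matrix.smul_mul, smul_sub, Matrix.mul_assoc]
  abel

end Gradient

theorem sqrtMC_factor_balance_general (n r : ℕ) (lam σmax : ℝ)
    (hlam : 0 < lam) (Ω : Set (Fin n × Fin n))
    (M : Matrix (Fin n) (Fin n) ℝ) (X Y : Matrix (Fin n) (Fin r) ℝ)
    (hX : specNorm X ≤ Real.sqrt (2 * σmax)) (hY : specNorm Y ≤ Real.sqrt (2 * σmax)) :
    frobNorm (Xᵀ * X - Yᵀ * Y) ≤ 2 * Real.sqrt (2 * σmax) / lam * gradNorm Ω M lam X Y := by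
  set s := Real.sqrt (2 * σmax)
  set G := gradNorm Ω M lam X Y
  have hXg : frobNorm (Xᵀ * gradX Ω M lam X Y) ≤ s * G :=
    (frobNorm_transpose_mul_le X _).trans <| mul_le_mul hX
      (frobNorm_gradX_le_gradNorm ..) (frobNorm_nonneg _) (Real.sqrt_nonneg _)
  have hYg : frobNorm ((gradY Ω M lam X Y)ᵀ * Y) ≤ s * G := by
    rw [← frobNorm_transpose, transpose_mul, transpose_transpose]
    exact (frobNorm_transpose_mul_le Y _).trans <| mul_le_mul hY
      (frobNorm_gradY_le_gradNorm ..) (frobNorm_nonneg _) (Real.sqrt_nonneg _)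
  have hscaled : lam * frobNorm (Xᵀ * X - Yᵀ * Y) ≤ 2 * s * G :=
    calc lam * frobNorm (Xᵀ * X - Yᵀ * Y)
        = frobNorm (Xᵀ * gradX Ω M lam X Y - (gradY Ω M lam X Y)ᵀ * Y) := by
          rw [transpose_mul_gradX_sub_transpose_gradY_mul, frobNorm_smul, abs_of_pos hlam]
      _ ≤ frobNorm (Xᵀ * gradX Ω M lam X Y) + frobNorm ((gradY Ω M lam X Y)ᵀ * Y) :=
          frobNorm_sub_le _ _
      _ ≤ 2 * s * G := by linarith
  rw [div_mul_eq_mul_div, le_div_iff₀ hlam]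
  linarith

/-- Near-balancedness of the factors at a point with small gradient:
`‖XᵀX − YᵀY‖_F ≤ (2√(2σmax)/λ) ‖∇g(X,Y)‖_F`. -/
theorem sqrtMC_factor_balance (n r : ℕ) (hn : 0 < n) (hr : 0 < r) (lam σmax : ℝ)
    (hlam : 0 < lam) (hσmax : 0 < σmax) (Ω : Set (Fin n × Fin n))
    (M : Matrix (Fin n) (Fin n) ℝ) (X Y : Matrix (Fin n) (Fin r) ℝ)
    (hθ : 0 < frobNorm (POmega Ω (X * Yᵀ - M)))
    (hX : specNorm X ≤ Real.sqrt (2 * σmax)) (hY : specNorm Y ≤ Real.sqrt (2 * σmax)) :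
    frobNorm (Xᵀ * X - Yᵀ * Y) ≤ 2 * Real.sqrt (2 * σmax) / lam * gradNorm Ω M lam X Y :=
  sqrtMC_factor_balance_general n r lam σmax hlam Ω M X Y hX hY
end

section
/- Let n, r be positive integers and Z ∈ ℝ^{n×n} a matrix of rank at most r. Then the nuclear norm of Z satisfies ‖Z‖_* = min{ (1/2)·(‖X‖_F² + ‖Y‖_F²) : X, Y ∈ ℝ^{n×r}, XYᵀ = Z }, and the minimum is attained. -/
open MeasureTheory ProbabilityTheory Matrix
open scoped ENNReal

/-! Write `Z = U Σ Vᵀ` keeping only the nonzero singular values: the columns of `V` are the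
eigenvectors of `ZᵀZ` with nonzero eigenvalue and `U = Z V Σ⁻¹`, so that `UᵀU = VᵀV = 1` and
`Σ` has `rank Z ≤ r` entries. If `X Yᵀ = Z`, then
`‖Z‖_* = tr (UᵀX (VᵀY)ᵀ) ≤ (‖UᵀX‖_F² + ‖VᵀY‖_F²) / 2 ≤ (‖X‖_F² + ‖Y‖_F²) / 2`,
the last step because `U Uᵀ` is an orthogonal projection. Equality holds for
`X = U Σ^{1/2}`, `Y = V Σ^{1/2}`, padded with zero columns up to width `r`. -/

lemma Fintype.sum_subtype_of_eq_zero {ι M : Type*} [Fintype ι] [AddCommMonoid M] {p : ι → Prop}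
    [DecidablePred p] {f : ι → M} (hf : ∀ i, ¬p i → f i = 0) : ∑ i : Subtype p, f i = ∑ i, f i := by
  rw [← Fintype.sum_subtype_add_sum_subtype p f, Fintype.sum_eq_zero (fun i : {i // ¬p i} => f i)
    fun i => hf i i.2, add_zero]

namespace Matrix

variable {m n ι κ : Type*} [Fintype m] [Fintype n] [Fintype ι] [Fintype κ]

lemma trace_transpose_mul_self_eq_sum_sq (A : Matrix m n ℝ) :
    trace (Aᵀ * A) = ∑ i, ∑ j, A i j ^ 2 := by
  simp only [trace, diag, mul_apply, transpose_apply, sq]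
  exact Finset.sum_comm

lemma trace_transpose_mul_self_nonneg (A : Matrix m n ℝ) : 0 ≤ trace (Aᵀ * A) := by
  rw [trace_transpose_mul_self_eq_sum_sq]
  positivity

lemma trace_transpose_mul_le (A B : Matrix m n ℝ) :
    trace (Aᵀ * B) ≤ (trace (Aᵀ * A) + trace (Bᵀ * B)) / 2 := by
  have h := trace_transpose_mul_self_nonneg (A - B)
  have hBA : trace (Bᵀ * A) = trace (Aᵀ * B) := by
    rw [← trace_transpose, transpose_mul, transpose_transpose]
  simp only [transpose_sub, Matrix.sub_mul, Matrix.mul_sub, trace_sub] at h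
  linarith

section

variable [DecidableEq ι]

lemma trace_transpose_mul_self_transpose_mul_le {U : Matrix n ι ℝ} (hU : Uᵀ * U = 1)
    (X : Matrix n m ℝ) : trace ((Uᵀ * X)ᵀ * (Uᵀ * X)) ≤ trace (Xᵀ * X) := by
  -- Pythagoras: `X - U Uᵀ X` is orthogonal to `U Uᵀ X`.
  set A := Uᵀ * X
  have h₁ : Xᵀ * (U * A) = Aᵀ * A := by
    rw [← Matrix.mul_assoc, ← transpose_transpose U, ← transpose_mul]
  have h₂ : (U * A)ᵀ * X = Aᵀ * A := by rw [transpose_mul, Matrix.mul_assoc]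
  have h₃ : (U * A)ᵀ * (U * A) = Aᵀ * A := by
    rw [transpose_mul, Matrix.mul_assoc, ← Matrix.mul_assoc Uᵀ, hU, Matrix.one_mul]
  have h := trace_transpose_mul_self_nonneg (X - U * A)
  simp only [transpose_sub, Matrix.sub_mul, Matrix.mul_sub, trace_sub, h₁, h₂, h₃] at h
  linarith

lemma sum_le_of_mul_transpose_eq {U : Matrix m ι ℝ} {V : Matrix n ι ℝ} (hU : Uᵀ * U = 1)
    (hV : Vᵀ * V = 1) {σ : ι → ℝ} {X : Matrix m κ ℝ} {Y : Matrix n κ ℝ}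
    (h : X * Yᵀ = U * diagonal σ * Vᵀ) :
    ∑ j, σ j ≤ (trace (Xᵀ * X) + trace (Yᵀ * Y)) / 2 := by
  have hσ : diagonal σ = (Uᵀ * X) * (Vᵀ * Y)ᵀ := by
    rw [transpose_mul, transpose_transpose, Matrix.mul_assoc, ← Matrix.mul_assoc X, h]
    simp only [Matrix.mul_assoc, hV, Matrix.mul_one]
    rw [← Matrix.mul_assoc, hU, Matrix.one_mul]
  calc ∑ j, σ j = trace ((Vᵀ * Y)ᵀ * (Uᵀ * X)) := by rw [← trace_diagonal, hσ, trace_mul_comm]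
    _ ≤ (trace ((Vᵀ * Y)ᵀ * (Vᵀ * Y)) + trace ((Uᵀ * X)ᵀ * (Uᵀ * X))) / 2 :=
      trace_transpose_mul_le _ _
    _ ≤ (trace (Xᵀ * X) + trace (Yᵀ * Y)) / 2 := by
      linarith [trace_transpose_mul_self_transpose_mul_le hU X,
        trace_transpose_mul_self_transpose_mul_le hV Y]

lemma trace_transpose_mul_self_mul_mul {U : Matrix m ι ℝ} {E : Matrix ι κ ℝ}
    (hU : Uᵀ * U = 1) (hE : E * Eᵀ = 1) (D : Matrix ι ι ℝ) :
    trace ((U * D * E)ᵀ * (U * D * E)) = trace (Dᵀ * D) := by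
  have h : (U * D * E)ᵀ * (U * D * E) = Eᵀ * (Dᵀ * D * E) := by
    simp only [transpose_mul, Matrix.mul_assoc]
    rw [← Matrix.mul_assoc Uᵀ, hU, Matrix.one_mul]
  rw [h, trace_mul_comm, Matrix.mul_assoc, hE, Matrix.mul_one]

lemma exists_mul_transpose_eq_of_card_le (hcard : Fintype.card ι ≤ Fintype.card κ)
    {U : Matrix m ι ℝ} {V : Matrix n ι ℝ} (hU : Uᵀ * U = 1) (hV : Vᵀ * V = 1) {σ : ι → ℝ}
    (hσ : ∀ j, 0 ≤ σ j) :
    ∃ (X : Matrix m κ ℝ) (Y : Matrix n κ ℝ), X * Yᵀ = U * diagonal σ * Vᵀ ∧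
      trace (Xᵀ * X) = ∑ j, σ j ∧ trace (Yᵀ * Y) = ∑ j, σ j := by
  classical
  obtain ⟨e⟩ := Function.Embedding.nonempty_of_card_le hcard
  set E : Matrix ι κ ℝ := (1 : Matrix κ κ ℝ).submatrix e id
  have hE : E * Eᵀ = 1 := by
    rw [transpose_submatrix, transpose_one, ← submatrix_mul _ _ _ _ _ Function.bijective_id,
      Matrix.mul_one, submatrix_one_embedding]
  -- `E` has orthonormal rows: `U * D * E` is `U * D` padded with zero columns.
  set D := diagonal fun j => √(σ j)
  have hDt : Dᵀ = D := diagonal_transpose _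
  have hD : D * D = diagonal σ := by
    rw [diagonal_mul_diagonal]
    exact congrArg diagonal (funext fun j => Real.mul_self_sqrt (hσ j))
  refine ⟨U * D * E, V * D * E, ?_, ?_, ?_⟩
  · simp only [transpose_mul, hDt, Matrix.mul_assoc]
    rw [← Matrix.mul_assoc E, hE, Matrix.one_mul, ← Matrix.mul_assoc D, hD]
  · rw [trace_transpose_mul_self_mul_mul hU hE, hDt, hD, trace_diagonal]
  · rw [trace_transpose_mul_self_mul_mul hV hE, hDt, hD, trace_diagonal]

end

namespace IsHermitian

variable {m : Type*} [Fintype m] [DecidableEq m] {A : Matrix m m ℝ} (hA : A.IsHermitian)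

lemma transpose_eigenvectorUnitary_mul_self :
    (hA.eigenvectorUnitary : Matrix m m ℝ)ᵀ * hA.eigenvectorUnitary = 1 := by
  simpa only [Unitary.coe_star, star_eq_conjTranspose, conjTranspose_eq_transpose_of_trivial] using
    Unitary.coe_star_mul_self hA.eigenvectorUnitary

lemma eigenvectorUnitary_mul_transpose_self :
    (hA.eigenvectorUnitary : Matrix m m ℝ) * (hA.eigenvectorUnitary : Matrix m m ℝ)ᵀ = 1 := by
  simpa only [Unitary.coe_star, star_eq_conjTranspose, conjTranspose_eq_transpose_of_trivial] using
    Unitary.coe_mul_star_self hA.eigenvectorUnitary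

lemma transpose_eigenvectorUnitary_mul_mul_eigenvectorUnitary :
    (hA.eigenvectorUnitary : Matrix m m ℝ)ᵀ * A * hA.eigenvectorUnitary =
      diagonal hA.eigenvalues := by
  simpa only [Unitary.conjStarAlgAut_apply, Unitary.coe_star, star_star, star_eq_conjTranspose,
    conjTranspose_eq_transpose_of_trivial, transpose_transpose, RCLike.ofReal_real_eq_id,
    Function.id_comp] using
    hA.conjStarAlgAut_star_eigenvectorUnitary

end IsHermitian

end Matrix

lemma frobNorm_sq_eq_trace {n m : ℕ} (A : Matrix (Fin n) (Fin m) ℝ) :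
    frobNorm A ^ 2 = trace (Aᵀ * A) := by
  rw [frobNorm, Real.sq_sqrt (by positivity), trace_transpose_mul_self_eq_sum_sq]

section SingularValueDecomposition

variable {n m : ℕ} (Z : Matrix (Fin n) (Fin m) ℝ)

noncomputable def fullRightSingVecs : Matrix (Fin m) (Fin m) ℝ :=
  (isHermitian_conjTranspose_mul_self Z).eigenvectorUnitary

lemma singVal_nonneg (j : Fin m) : 0 ≤ singVal Z j := Real.sqrt_nonneg _

lemma sq_singVal (j : Fin m) :
    singVal Z j ^ 2 = (isHermitian_conjTranspose_mul_self Z).eigenvalues j :=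
  Real.sq_sqrt ((posSemidef_conjTranspose_mul_self Z).eigenvalues_nonneg j)

lemma transpose_mul_self_mul_fullRightSingVecs :
    (Z * fullRightSingVecs Z)ᵀ * (Z * fullRightSingVecs Z) =
      diagonal fun j => singVal Z j ^ 2 := by
  have h :=
    (isHermitian_conjTranspose_mul_self Z).transpose_eigenvectorUnitary_mul_mul_eigenvectorUnitary
  rw [funext (sq_singVal Z), ← h, fullRightSingVecs, transpose_mul]
  simp only [Matrix.mul_assoc]
  rfl

lemma mul_fullRightSingVecs_apply_eq_zero {j : Fin m} (hj : singVal Z j = 0) (i : Fin n) :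
    (Z * fullRightSingVecs Z) i j = 0 := by
  have h := congrFun (congrFun (transpose_mul_self_mul_fullRightSingVecs Z) j) j
  generalize Z * fullRightSingVecs Z = M at h ⊢
  simp only [diagonal_apply_eq, hj, mul_apply, transpose_apply, ← sq, ne_eq, OfNat.ofNat_ne_zero,
    not_false_eq_true, zero_pow] at h
  rw [Finset.sum_eq_zero_iff_of_nonneg fun _ _ => sq_nonneg _] at h
  simpa using h i (Finset.mem_univ i)

abbrev singValSupport : Type := {j : Fin m // singVal Z j ≠ 0}

noncomputable def rightSingVecs : Matrix (Fin m) (singValSupport Z) ℝ :=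
  (fullRightSingVecs Z).submatrix id Subtype.val

noncomputable def leftSingVecs : Matrix (Fin n) (singValSupport Z) ℝ :=
  Z * rightSingVecs Z * diagonal fun j : singValSupport Z => (singVal Z j)⁻¹

lemma transpose_rightSingVecs_mul_self : (rightSingVecs Z)ᵀ * rightSingVecs Z = 1 := by
  rw [rightSingVecs, transpose_submatrix, ← submatrix_mul _ _ _ _ _ Function.bijective_id,
    fullRightSingVecs, IsHermitian.transpose_eigenvectorUnitary_mul_self,
    ← Function.Embedding.coe_subtype, submatrix_one_embedding]

lemma transpose_mul_self_mul_rightSingVecs :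
    (Z * rightSingVecs Z)ᵀ * (Z * rightSingVecs Z) =
      diagonal fun j : singValSupport Z => singVal Z j ^ 2 := by
  have h : Z * rightSingVecs Z = (Z * fullRightSingVecs Z).submatrix id Subtype.val := rfl
  rw [h, transpose_submatrix, ← submatrix_mul _ _ _ _ _ Function.bijective_id,
    transpose_mul_self_mul_fullRightSingVecs, ← Function.Embedding.coe_subtype,
    submatrix_diagonal_embedding]
  rfl

lemma transpose_leftSingVecs_mul_self : (leftSingVecs Z)ᵀ * leftSingVecs Z = 1 := by
  rw [leftSingVecs, transpose_mul, diagonal_transpose, Matrix.mul_assoc,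
    ← Matrix.mul_assoc _ (Z * rightSingVecs Z), transpose_mul_self_mul_rightSingVecs,
    diagonal_mul_diagonal, diagonal_mul_diagonal, ← diagonal_one]
  exact congrArg diagonal (funext fun j => by field_simp [j.2])

lemma mul_rightSingVecs_mul_transpose : Z * rightSingVecs Z * (rightSingVecs Z)ᵀ = Z := by
  have hZ : Z * fullRightSingVecs Z * (fullRightSingVecs Z)ᵀ = Z := by
    rw [Matrix.mul_assoc, fullRightSingVecs, IsHermitian.eigenvectorUnitary_mul_transpose_self,
      Matrix.mul_one]
  -- the columns of `Z * fullRightSingVecs Z` outside the support vanish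
  ext i k
  conv_rhs => rw [← hZ, mul_apply]
  refine Eq.trans ?_ (Fintype.sum_subtype_of_eq_zero (p := (singVal Z · ≠ 0)) fun j hj => ?_)
  · rfl
  · rw [mul_fullRightSingVecs_apply_eq_zero Z (not_not.mp hj), zero_mul]

lemma leftSingVecs_mul_diagonal_mul_transpose :
    leftSingVecs Z * diagonal (fun j : singValSupport Z => singVal Z j) * (rightSingVecs Z)ᵀ =
      Z := by
  have h : (diagonal fun j : singValSupport Z => (singVal Z j)⁻¹ * singVal Z j) = 1 := by
    rw [← diagonal_one]
    exact congrArg diagonal (funext fun j => inv_mul_cancel₀ j.2)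
  rw [leftSingVecs, Matrix.mul_assoc (Z * rightSingVecs Z), diagonal_mul_diagonal, h,
    Matrix.mul_one, mul_rightSingVecs_mul_transpose]

lemma card_singValSupport : Fintype.card (singValSupport Z) = Z.rank := by
  rw [← rank_conjTranspose_mul_self,
    (isHermitian_conjTranspose_mul_self Z).rank_eq_card_non_zero_eigs]
  refine Fintype.card_congr (Equiv.subtypeEquivRight fun j => ?_)
  rw [← sq_singVal, pow_ne_zero_iff two_ne_zero]

lemma sum_singValSupport : ∑ j : singValSupport Z, singVal Z j = nucNorm Z :=
  Fintype.sum_subtype_of_eq_zero fun _ => not_not.mp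

end SingularValueDecomposition

theorem nucNorm_eq_min_factorization_general (n r : ℕ)
    (Z : Matrix (Fin n) (Fin n) ℝ) (hrank : Z.rank ≤ r) :
    ∃ X Y : Matrix (Fin n) (Fin r) ℝ, X * Yᵀ = Z ∧
      nucNorm Z = 1 / 2 * (frobNorm X ^ 2 + frobNorm Y ^ 2) ∧
      ∀ X' Y' : Matrix (Fin n) (Fin r) ℝ, X' * Y'ᵀ = Z →
        nucNorm Z ≤ 1 / 2 * (frobNorm X' ^ 2 + frobNorm Y' ^ 2) := by
  have hU := transpose_leftSingVecs_mul_self Z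
  have hV := transpose_rightSingVecs_mul_self Z
  have hsvd := leftSingVecs_mul_diagonal_mul_transpose Z
  have hcard : Fintype.card (singValSupport Z) ≤ Fintype.card (Fin r) := by
    rw [card_singValSupport, Fintype.card_fin]
    exact hrank
  obtain ⟨X, Y, hXY, hX, hY⟩ := exists_mul_transpose_eq_of_card_le hcard hU hV (singVal_nonneg Z ·)
  simp only [← frobNorm_sq_eq_trace, sum_singValSupport] at hX hY
  refine ⟨X, Y, hXY.trans hsvd, by rw [hX, hY]; ring, fun X' Y' hXY' => ?_⟩
  have h := sum_le_of_mul_transpose_eq hU hV (hXY'.trans hsvd.symm)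
  rw [sum_singValSupport, ← frobNorm_sq_eq_trace, ← frobNorm_sq_eq_trace] at h
  linarith

/-- Variational characterization of the nuclear norm of a matrix of rank
at most `r`: `‖Z‖_* = min { (‖X‖_F² + ‖Y‖_F²)/2 : X Yᵀ = Z }`, and the minimum is
attained. -/
theorem nucNorm_eq_min_factorization (n r : ℕ) (hn : 0 < n) (hr : 0 < r)
    (Z : Matrix (Fin n) (Fin n) ℝ) (hrank : Z.rank ≤ r) :
    ∃ X Y : Matrix (Fin n) (Fin r) ℝ, X * Yᵀ = Z ∧
      nucNorm Z = 1 / 2 * (frobNorm X ^ 2 + frobNorm Y ^ 2) ∧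
      ∀ X' Y' : Matrix (Fin n) (Fin r) ℝ, X' * Y'ᵀ = Z →
        nucNorm Z ≤ 1 / 2 * (frobNorm X' ^ 2 + frobNorm Y' ^ 2) :=
  nucNorm_eq_min_factorization_general n r Z hrank
end
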